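/- Let f : ℝ³ → ℝ be a harmonic function. Then the product (x² + y² − 2z²) · f(x, y, z) is harmonic on ℝ³ if and only if there exist real numbers α, β, γ such that f(x, y, z) = α + β·xyz + γ·(x² − y²)z for all (x, y, z) ∈ ℝ³. -/

import Mathlib

/-- The Laplacian of `f : ℝ³ → ℝ` at a point, as the sum of the three second partial
derivatives along the coordinate directions. -/
noncomputable def laplacian3 (f : EuclideanSpace ℝ (Fin 3) → ℝ)
    (p : EuclideanSpace ℝ (Fin 3)) : ℝ :=
  ∑ i : Fin 3,
    fderiv ℝ (fun q => fderiv ℝ f q (EuclideanSpace.single i 1)) p (EuclideanSpace.single i 1)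

/-- A function `f : ℝ³ → ℝ` is harmonic if it is infinitely differentiable and its
Laplacian vanishes identically. -/
def Harmonic3 (f : EuclideanSpace ℝ (Fin 3) → ℝ) : Prop :=
  ContDiff ℝ (⊤ : ℕ∞) f ∧ ∀ p, laplacian3 f p = 0

noncomputable section
open EuclideanSpace
local notation "E3" => EuclideanSpace ℝ (Fin 3)

namespace ConeHarmonic

def ee (i : Fin 3) : EuclideanSpace ℝ (Fin 3) := EuclideanSpace.single i 1

def pd (i : Fin 3) (f : EuclideanSpace ℝ (Fin 3) → ℝ) : EuclideanSpace ℝ (Fin 3) → ℝ :=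
  fun p => fderiv ℝ f p (ee i)

@[fun_prop] lemma diff_coord (j : Fin 3) : Differentiable ℝ (fun q : E3 => q j) :=
  (EuclideanSpace.proj (𝕜 := ℝ) j).differentiable

@[fun_prop] lemma diffat_coord (j : Fin 3) (p : E3) : DifferentiableAt ℝ (fun q : E3 => q j) p :=
  diff_coord j p

@[fun_prop] lemma cd_coord (j : Fin 3) : ContDiff ℝ (⊤ : ℕ∞) (fun q : E3 => q j) :=
  (EuclideanSpace.proj (𝕜 := ℝ) j).contDiff

@[fun_prop] lemma pd_smooth {f : E3 → ℝ} (hf : ContDiff ℝ (⊤ : ℕ∞) f) (i : Fin 3) :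
    ContDiff ℝ (⊤ : ℕ∞) (pd i f) :=
  (hf.fderiv_right (by simp)).clm_apply contDiff_const

@[fun_prop] lemma pd_diff {f : E3 → ℝ} (hf : ContDiff ℝ (⊤ : ℕ∞) f) (i : Fin 3) :
    Differentiable ℝ (pd i f) :=
  (pd_smooth hf i).differentiable (by simp)

lemma smooth_diff {f : E3 → ℝ} (hf : ContDiff ℝ (⊤ : ℕ∞) f) : Differentiable ℝ f :=
  hf.differentiable (by simp)

-- second derivative interchange
lemma fderiv_pd {f : E3 → ℝ} (hf : ContDiff ℝ (⊤ : ℕ∞) f) (i : Fin 3) (p v : E3) :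
    fderiv ℝ (pd i f) p v = fderiv ℝ (fderiv ℝ f) p v (ee i) := by
  have hc : DifferentiableAt ℝ (fderiv ℝ f) p :=
    ((hf.fderiv_right (m := 1) (by exact WithTop.coe_le_coe.mpr le_top)).differentiable (by simp)) p
  have h := fderiv_clm_apply hc (differentiableAt_const (ee i))
  show fderiv ℝ (fun q => fderiv ℝ f q (ee i)) p v = _
  rw [h]
  simp

lemma snd_symm {f : E3 → ℝ} (hf : ContDiff ℝ (⊤ : ℕ∞) f) (p v w : E3) :
    fderiv ℝ (fderiv ℝ f) p v w = fderiv ℝ (fderiv ℝ f) p w v :=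
  second_derivative_symmetric (fun y => (smooth_diff hf y).hasFDerivAt)
    (((hf.fderiv_right (m := 1) (by exact WithTop.coe_le_coe.mpr le_top)).differentiable (by simp)) p).hasFDerivAt v w

lemma pd_comm {f : E3 → ℝ} (hf : ContDiff ℝ (⊤ : ℕ∞) f) (i j : Fin 3) (p : E3) :
    pd i (pd j f) p = pd j (pd i f) p := by
  show fderiv ℝ (pd j f) p (ee i) = fderiv ℝ (pd i f) p (ee j)
  rw [fderiv_pd hf j p (ee i), fderiv_pd hf i p (ee j), snd_symm hf]

lemma clm_expand (φ : E3 →L[ℝ] ℝ) (p : E3) :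
    φ p = p 0 * φ (ee 0) + p 1 * φ (ee 1) + p 2 * φ (ee 2) := by
  have hp : p = ∑ i : Fin 3, p i • ee i := by
    ext j
    simp [ee, EuclideanSpace.single_apply, Fin.sum_univ_three]
    fin_cases j <;> simp
  conv_lhs => rw [hp]
  rw [map_sum, Fin.sum_univ_three]
  simp [smul_eq_mul]

/-- Euler operator in coordinates -/
lemma euler_coord {f : E3 → ℝ} (p : E3) :
    fderiv ℝ f p p = p 0 * pd 0 f p + p 1 * pd 1 f p + p 2 * pd 2 f p :=
  clm_expand (fderiv ℝ f p) p

lemma pd_euler {f : E3 → ℝ} (hf : ContDiff ℝ (⊤ : ℕ∞) f) (i : Fin 3) (p : E3) :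
    fderiv ℝ (fun q => fderiv ℝ f q q) p (ee i)
      = fderiv ℝ (pd i f) p p + pd i f p := by
  have hc : DifferentiableAt ℝ (fderiv ℝ f) p :=
    ((hf.fderiv_right (m := 1) (by exact WithTop.coe_le_coe.mpr le_top)).differentiable (by simp)) p
  have h := fderiv_clm_apply hc differentiableAt_fun_id
  rw [h]
  simp only [ContinuousLinearMap.add_apply, ContinuousLinearMap.coe_comp',
    Function.comp_apply, ContinuousLinearMap.flip_apply]
  rw [fderiv_pd hf i p p, snd_symm hf p p (ee i), fderiv_id']
  simp [pd, add_comm]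

lemma pd_euler' {f : E3 → ℝ} (hf : ContDiff ℝ (⊤ : ℕ∞) f) (i : Fin 3) (p : E3) :
    pd i (fun q => fderiv ℝ f q q) p = fderiv ℝ (pd i f) p p + pd i f p :=
  pd_euler hf i p

lemma eigen_neg_one_zero {h : E3 → ℝ} (hd : Differentiable ℝ h)
    (hE : ∀ q, fderiv ℝ h q q = - h q) : ∀ p, h p = 0 := by
  intro p
  set φ : ℝ → ℝ := fun t => t * h (t • p) with hφ
  have key : ∀ t : ℝ, HasDerivAt φ 0 t := by
    intro t
    have h1 : HasDerivAt (fun s : ℝ => s • p) p t := by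
      simpa using (hasDerivAt_id t).smul_const p
    have h2 : HasDerivAt (fun s : ℝ => h (s • p)) (fderiv ℝ h (t • p) p) t :=
      (hd (t • p)).hasFDerivAt.comp_hasDerivAt t h1
    have h3 := (hasDerivAt_id t).mul h2
    simp only [id] at h3
    have heq : 1 * h (t • p) + t * fderiv ℝ h (t • p) p = 0 := by
      have hq : fderiv ℝ h (t • p) (t • p) = - h (t • p) := hE _
      rw [map_smul, smul_eq_mul] at hq
      linarith
    rw [heq] at h3
    exact h3
  have hconst : φ 1 = φ 0 := by
    apply is_const_of_deriv_eq_zero (fun t => (key t).differentiableAt)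
    intro t; exact (key t).deriv
  have h1 : φ 1 = h p := by simp [hφ]
  have h0 : φ 0 = 0 := by simp [hφ]
  rw [h1, h0] at hconst; exact hconst

lemma const_of_pd_zero {h : E3 → ℝ} (hd : Differentiable ℝ h)
    (h0 : ∀ i p, pd i h p = 0) : ∀ p, h p = h 0 := by
  intro p
  apply is_const_of_fderiv_eq_zero hd
  intro q
  ext v
  rw [ContinuousLinearMap.zero_apply, clm_expand (fderiv ℝ h q) v]
  have e0 := h0 0 q; have e1 := h0 1 q; have e2 := h0 2 q
  simp only [pd] at e0 e1 e2
  rw [e0, e1, e2]; ring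

lemma pd_add {a b : E3 → ℝ} {i : Fin 3} {p : E3} (ha : DifferentiableAt ℝ a p)
    (hb : DifferentiableAt ℝ b p) :
    pd i (fun q => a q + b q) p = pd i a p + pd i b p := by
  simp only [pd]
  rw [fderiv_fun_add ha hb]; rfl

lemma pd_sub {a b : E3 → ℝ} {i : Fin 3} {p : E3} (ha : DifferentiableAt ℝ a p)
    (hb : DifferentiableAt ℝ b p) :
    pd i (fun q => a q - b q) p = pd i a p - pd i b p := by
  simp only [pd]
  rw [fderiv_fun_sub ha hb]; rfl

lemma pd_mul {a b : E3 → ℝ} {i : Fin 3} {p : E3} (ha : DifferentiableAt ℝ a p)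
    (hb : DifferentiableAt ℝ b p) :
    pd i (fun q => a q * b q) p = pd i a p * b p + a p * pd i b p := by
  simp only [pd]
  rw [fderiv_fun_mul ha hb]
  simp only [ContinuousLinearMap.add_apply, ContinuousLinearMap.smul_apply, smul_eq_mul]
  ring

lemma pd_const (c : ℝ) (i : Fin 3) (p : E3) : pd i (fun _ => c) p = 0 := by
  simp [pd]

lemma pd_const_mul {b : E3 → ℝ} {i : Fin 3} {p : E3} (hb : DifferentiableAt ℝ b p) (c : ℝ) :
    pd i (fun q => c * b q) p = c * pd i b p := by
  simp only [pd]
  rw [fderiv_const_mul hb]; rfl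

lemma pd_coord (i j : Fin 3) (p : E3) :
    pd i (fun q : E3 => q j) p = if i = j then 1 else 0 := by
  simp only [pd]
  rw [show (fun q : E3 => q j) = ⇑(EuclideanSpace.proj j (𝕜 := ℝ)) from rfl,
    ContinuousLinearMap.fderiv]
  show (ee i) j = _
  simp [ee, EuclideanSpace.single_apply]
  split <;> split <;> first | rfl | omega

lemma lap_pd (g : E3 → ℝ) (p : E3) :
    laplacian3 g p = pd 0 (pd 0 g) p + pd 1 (pd 1 g) p + pd 2 (pd 2 g) p := by
  simp only [laplacian3, Fin.sum_univ_three]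
  rfl

def cc : Fin 3 → ℝ := ![1, 1, -2]

def uu : E3 → ℝ := fun q => q 0 * q 0 + q 1 * q 1 - 2 * (q 2 * q 2)

@[fun_prop] lemma diff_uu : Differentiable ℝ uu := by unfold uu; fun_prop

@[fun_prop] lemma diffat_uu (p : E3) : DifferentiableAt ℝ uu p := diff_uu p

lemma pd_uu (i : Fin 3) (q : E3) : pd i uu q = 2 * cc i * q i := by
  unfold uu
  rw [pd_sub (by fun_prop) (by fun_prop), pd_add (by fun_prop) (by fun_prop),
    pd_mul (by fun_prop) (by fun_prop), pd_mul (by fun_prop) (by fun_prop),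
    pd_const_mul (by fun_prop), pd_mul (by fun_prop) (by fun_prop)]
  simp only [pd_coord]
  fin_cases i <;> simp [cc] <;> ring

lemma pdpd_mul_uu {f : E3 → ℝ} (hf : ContDiff ℝ (⊤ : ℕ∞) f) (i : Fin 3) (p : E3) :
    pd i (pd i (fun q => uu q * f q)) p
      = 2 * cc i * f p + 4 * cc i * (p i * pd i f p) + uu p * pd i (pd i f) p := by
  have hfd : Differentiable ℝ f := smooth_diff hf
  have hpdd : Differentiable ℝ (pd i f) := pd_diff hf i
  have d1 : (pd i fun q => uu q * f q) = fun q => (2 * cc i * q i) * f q + uu q * pd i f q := by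
    funext q
    rw [pd_mul (by fun_prop) ((smooth_diff hf) q), pd_uu]
  rw [d1, pd_add (by fun_prop) (by fun_prop),
    pd_mul (by fun_prop) ((smooth_diff hf) p),
    pd_mul (by fun_prop) ((pd_diff hf i) p),
    pd_const_mul (by fun_prop), pd_coord, pd_uu]
  simp only [if_pos rfl, if_true]
  ring

lemma lap_mul {f : E3 → ℝ} (hf : ContDiff ℝ (⊤ : ℕ∞) f) (p : E3) :
    laplacian3 (fun q => (q 0 ^ 2 + q 1 ^ 2 - 2 * q 2 ^ 2) * f q) p
      = (p 0 ^ 2 + p 1 ^ 2 - 2 * p 2 ^ 2) * laplacian3 f p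
        + 4 * (p 0 * pd 0 f p + p 1 * pd 1 f p - 2 * (p 2 * pd 2 f p)) := by
  have huf : (fun q : E3 => (q 0 ^ 2 + q 1 ^ 2 - 2 * q 2 ^ 2) * f q)
      = fun q => uu q * f q := by
    funext q; simp only [uu]; ring
  rw [huf, lap_pd (fun q => uu q * f q) p, pdpd_mul_uu hf 0 p, pdpd_mul_uu hf 1 p,
    pdpd_mul_uu hf 2 p, lap_pd f p]
  simp only [uu, cc, Matrix.cons_val]
  norm_num
  ring

def PP (α β γ : ℝ) : E3 → ℝ :=
  fun p => α + β * (p 0 * p 1 * p 2) + γ * ((p 0 ^ 2 - p 1 ^ 2) * p 2)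

lemma PP_eq (α β γ : ℝ) : PP α β γ =
    fun q : E3 => (α + β * (q 0 * q 1 * q 2)) + γ * ((q 0 * q 0 - q 1 * q 1) * q 2) := by
  funext q; simp only [PP]; ring

@[fun_prop] lemma diff_PP (α β γ : ℝ) : Differentiable ℝ (PP α β γ) := by
  rw [PP_eq]; fun_prop

lemma pd_PP (α β γ : ℝ) (i : Fin 3) (q : E3) :
    pd i (PP α β γ) q
      = β * (((if i = 0 then (1:ℝ) else 0) * q 1 + q 0 * (if i = 1 then 1 else 0)) * q 2
            + q 0 * q 1 * (if i = 2 then 1 else 0))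
        + γ * ((((if i = 0 then (1:ℝ) else 0) * q 0 + q 0 * (if i = 0 then 1 else 0))
              - ((if i = 1 then (1:ℝ) else 0) * q 1 + q 1 * (if i = 1 then 1 else 0))) * q 2
            + (q 0 * q 0 - q 1 * q 1) * (if i = 2 then 1 else 0)) := by
  rw [PP_eq]
  rw [pd_add (by fun_prop) (by fun_prop), pd_add (by fun_prop) (by fun_prop),
    pd_const α, pd_const_mul (by fun_prop), pd_const_mul (by fun_prop),
    pd_mul (by fun_prop) (by fun_prop), pd_mul (by fun_prop) (by fun_prop),
    pd_mul (by fun_prop) (by fun_prop), pd_sub (by fun_prop) (by fun_prop),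
    pd_mul (by fun_prop) (by fun_prop), pd_mul (by fun_prop) (by fun_prop)]
  simp only [pd_coord]
  ring

lemma L_PP (α β γ : ℝ) (p : E3) :
    p 0 * pd 0 (PP α β γ) p + p 1 * pd 1 (PP α β γ) p - 2 * (p 2 * pd 2 (PP α β γ) p) = 0 := by
  rw [pd_PP, pd_PP, pd_PP]
  simp
  ring

lemma reverse_dir {f : E3 → ℝ} (hf : Harmonic3 f) (α β γ : ℝ)
    (hform : ∀ p, f p = PP α β γ p) :
    Harmonic3 (fun p => (p 0 ^ 2 + p 1 ^ 2 - 2 * p 2 ^ 2) * f p) := by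
  have hfP : f = PP α β γ := funext hform
  constructor
  · have h1 : ContDiff ℝ (⊤ : ℕ∞) f := hf.1
    fun_prop
  · intro p
    rw [lap_mul hf.1 p, hf.2 p]
    have e0 : pd 0 f p = pd 0 (PP α β γ) p := by rw [hfP]
    have e1 : pd 1 f p = pd 1 (PP α β γ) p := by rw [hfP]
    have e2 : pd 2 f p = pd 2 (PP α β γ) p := by rw [hfP]
    rw [e0, e1, e2]
    have := L_PP α β γ p
    linarith [L_PP α β γ p]

section Forward
variable {f : E3 → ℝ}

lemma euler_fun_smooth {h : E3 → ℝ} (hh : ContDiff ℝ (⊤ : ℕ∞) h) :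
    ContDiff ℝ (⊤ : ℕ∞) (fun q => fderiv ℝ h q q) :=
  (hh.fderiv_right (by simp)).clm_apply contDiff_id

/-- identity A(i) -/
lemma ident_A (hsm : ContDiff ℝ (⊤ : ℕ∞) f)
    (hL : ∀ p : E3, p 0 * pd 0 f p + p 1 * pd 1 f p - 2 * (p 2 * pd 2 f p) = 0)
    (i : Fin 3) (p : E3) :
    fderiv ℝ (pd i f) p p + pd i f p
      = 3 * ((if i = 2 then (1:ℝ) else 0) * pd 2 f p + p 2 * pd i (pd 2 f) p) := by
  have hgd : Differentiable ℝ (pd 2 f) := pd_diff hsm 2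
  have EulerF : (fun q => fderiv ℝ f q q) = (fun q => 3 * (q 2 * pd 2 f q)) := by
    funext q
    rw [euler_coord]
    have := hL q
    linarith
  rw [← pd_euler' hsm i p, EulerF,
    pd_const_mul (by fun_prop), pd_mul (by fun_prop) (hgd p), pd_coord]

/-- the function version of `laplacian3 f = 0` -/
lemma lapfun_zero (hΔ : ∀ p, laplacian3 f p = 0) :
    (fun q : E3 => pd 0 (pd 0 f) q + pd 1 (pd 1 f) q + pd 2 (pd 2 f) q) = (fun _ => (0:ℝ)) := by
  funext q
  rw [← lap_pd]
  exact hΔ q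

lemma lap_g_zero (hsm : ContDiff ℝ (⊤ : ℕ∞) f) (hΔ : ∀ p, laplacian3 f p = 0) (p : E3) :
    pd 0 (pd 0 (pd 2 f)) p + pd 1 (pd 1 (pd 2 f)) p + pd 2 (pd 2 (pd 2 f)) p = 0 := by
  have hswap : ∀ i : Fin 3, ∀ q : E3, pd i (pd i (pd 2 f)) q = pd 2 (pd i (pd i f)) q := by
    intro i q
    have h1 : pd i (pd 2 f) = pd 2 (pd i f) := funext (fun r => pd_comm hsm i 2 r)
    rw [h1]
    exact pd_comm (pd_smooth hsm i) i 2 q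
  rw [hswap 0 p, hswap 1 p, hswap 2 p]
  have hadd : ∀ q : E3, pd 2 (fun r => pd 0 (pd 0 f) r + pd 1 (pd 1 f) r + pd 2 (pd 2 f) r) q
      = pd 2 (pd 0 (pd 0 f)) q + pd 2 (pd 1 (pd 1 f)) q + pd 2 (pd 2 (pd 2 f)) q := by
    intro q
    have d0 : Differentiable ℝ (pd 0 (pd 0 f)) := pd_diff (pd_smooth hsm 0) 0
    have d1 : Differentiable ℝ (pd 1 (pd 1 f)) := pd_diff (pd_smooth hsm 1) 1
    have d2 : Differentiable ℝ (pd 2 (pd 2 f)) := pd_diff (pd_smooth hsm 2) 2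
    rw [pd_add (by fun_prop) (d2 q), pd_add (d0 q) (d1 q)]
  have h0 := hadd p
  rw [lapfun_zero hΔ] at h0
  rw [← h0, pd_const]

lemma sum_fderiv_lap_zero (hsm : ContDiff ℝ (⊤ : ℕ∞) f) (hΔ : ∀ p, laplacian3 f p = 0) (p : E3) :
    fderiv ℝ (pd 0 (pd 0 f)) p p + fderiv ℝ (pd 1 (pd 1 f)) p p
      + fderiv ℝ (pd 2 (pd 2 f)) p p = 0 := by
  have d0 : Differentiable ℝ (pd 0 (pd 0 f)) := pd_diff (pd_smooth hsm 0) 0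
  have d1 : Differentiable ℝ (pd 1 (pd 1 f)) := pd_diff (pd_smooth hsm 1) 1
  have d2 : Differentiable ℝ (pd 2 (pd 2 f)) := pd_diff (pd_smooth hsm 2) 2
  have hadd : fderiv ℝ (fun r => pd 0 (pd 0 f) r + pd 1 (pd 1 f) r + pd 2 (pd 2 f) r) p
      = fderiv ℝ (fun r => pd 0 (pd 0 f) r + pd 1 (pd 1 f) r) p + fderiv ℝ (pd 2 (pd 2 f)) p := by
    exact fderiv_add (by fun_prop) (d2 p)
  have hadd2 : fderiv ℝ (fun r : E3 => pd 0 (pd 0 f) r + pd 1 (pd 1 f) r) p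
      = fderiv ℝ (pd 0 (pd 0 f)) p + fderiv ℝ (pd 1 (pd 1 f)) p := fderiv_add (d0 p) (d1 p)
  have hz : fderiv ℝ (fun r : E3 => pd 0 (pd 0 f) r + pd 1 (pd 1 f) r + pd 2 (pd 2 f) r) p = 0 := by
    rw [lapfun_zero hΔ]
    exact fderiv_const_apply 0
  rw [hadd, hadd2] at hz
  have := congrArg (fun (φ : E3 →L[ℝ] ℝ) => φ p) hz
  simpa using this

/-- second derivative along z vanishes, and Euler identity for g -/
lemma g_facts (hsm : ContDiff ℝ (⊤ : ℕ∞) f) (hΔ : ∀ p, laplacian3 f p = 0)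
    (hL : ∀ p : E3, p 0 * pd 0 f p + p 1 * pd 1 f p - 2 * (p 2 * pd 2 f p) = 0) :
    (∀ p, pd 2 (pd 2 f) p = 0) ∧ (∀ p, fderiv ℝ (pd 2 f) p p = 2 * pd 2 f p) := by
  have hgsm : ContDiff ℝ (⊤ : ℕ∞) (pd 2 f) := pd_smooth hsm 2
  have hg2 : ∀ p, pd 2 (pd 2 f) p = 0 := by
    intro p
    -- differentiate identity A(i) along direction i, then sum over i
    have B : ∀ i : Fin 3, fderiv ℝ (pd i (pd i f)) p p + 2 * pd i (pd i f) p
        = 3 * (2 * (if i = 2 then (1:ℝ) else 0) * pd i (pd 2 f) p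
            + p 2 * pd i (pd i (pd 2 f)) p) := by
      intro i
      have hisms : ContDiff ℝ (⊤ : ℕ∞) (pd i f) := pd_smooth hsm i
      have hgi : Differentiable ℝ (pd i (pd 2 f)) := pd_diff hgsm i
      have hgd : Differentiable ℝ (pd 2 f) := pd_diff hsm 2
      have hFG : (fun q => fderiv ℝ (pd i f) q q + pd i f q)
          = (fun q => 3 * ((if i = 2 then (1:ℝ) else 0) * pd 2 f q + q 2 * pd i (pd 2 f) q)) :=
        funext (fun q => ident_A hsm hL i q)
      have lhs1 : pd i (fun q => fderiv ℝ (pd i f) q q + pd i f q) p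
          = fderiv ℝ (pd i (pd i f)) p p + 2 * pd i (pd i f) p := by
        rw [pd_add (((euler_fun_smooth hisms).differentiable (by simp)) p)
          ((pd_diff hsm i) p), pd_euler' hisms i p]
        ring
      have rhs1 : pd i (fun q => 3 * ((if i = 2 then (1:ℝ) else 0) * pd 2 f q
            + q 2 * pd i (pd 2 f) q)) p
          = 3 * (2 * (if i = 2 then (1:ℝ) else 0) * pd i (pd 2 f) p
            + p 2 * pd i (pd i (pd 2 f)) p) := by
        rw [pd_const_mul (by fun_prop), pd_add (by fun_prop) (by fun_prop),
          pd_const_mul (hgd p), pd_mul (by fun_prop) (hgi p), pd_coord]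
        ring
      rw [← lhs1, hFG, rhs1]
    have b0 := B 0; have b1 := B 1; have b2 := B 2
    simp only [show ((0:Fin 3) = 2) = False by simp, show ((1:Fin 3) = 2) = False by simp,
      if_false, if_true, reduceIte] at b0 b1 b2
    have hs1 := sum_fderiv_lap_zero hsm hΔ p
    have hs2 := lap_g_zero hsm hΔ p
    have hlapf : pd 0 (pd 0 f) p + pd 1 (pd 1 f) p + pd 2 (pd 2 f) p = 0 := by
      rw [← lap_pd]; exact hΔ p
    have hs2' := congrArg (fun x => p 2 * x) hs2
    simp only [mul_zero, mul_add] at hs2'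
    linarith
  refine ⟨hg2, fun p => ?_⟩
  have := ident_A hsm hL 2 p
  rw [hg2 p] at this
  simp at this
  linarith

end Forward

lemma euler_step {h : E3 → ℝ} (hh : ContDiff ℝ (⊤ : ℕ∞) h) (c : ℝ)
    (hE : ∀ p, fderiv ℝ h p p = c * h p) (i : Fin 3) (p : E3) :
    fderiv ℝ (pd i h) p p = (c - 1) * pd i h p := by
  have hFG : (fun q => fderiv ℝ h q q) = fun q => c * h q := funext hE
  have h2 := pd_euler' hh i p
  rw [hFG, pd_const_mul ((smooth_diff hh) p)] at h2
  linear_combination -h2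

lemma gij_const {g : E3 → ℝ} (hg : ContDiff ℝ (⊤ : ℕ∞) g)
    (hEg : ∀ p, fderiv ℝ g p p = 2 * g p) (i j : Fin 3) (p : E3) :
    pd j (pd i g) p = pd j (pd i g) 0 := by
  have e1 : ∀ q, fderiv ℝ (pd i g) q q = 1 * pd i g q := by
    intro q; rw [euler_step hg 2 hEg i q]; ring
  have e0 : ∀ q, fderiv ℝ (pd j (pd i g)) q q = 0 * pd j (pd i g) q := by
    intro q; rw [euler_step (pd_smooth hg i) 1 e1 j q]; ring
  have em1 : ∀ k : Fin 3, ∀ q, fderiv ℝ (pd k (pd j (pd i g))) q q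
      = - pd k (pd j (pd i g)) q := by
    intro k q
    rw [euler_step (pd_smooth (pd_smooth hg i) j) 0 e0 k q]; ring
  have hz : ∀ k : Fin 3, ∀ q, pd k (pd j (pd i g)) q = 0 := fun k =>
    eigen_neg_one_zero (pd_diff (pd_smooth (pd_smooth hg i) j) k) (em1 k)
  exact const_of_pd_zero (pd_diff (pd_smooth hg i) j) (fun k q => hz k q) p

lemma eigen_val0 {g : E3 → ℝ} (c : ℝ) (hc : c ≠ 0)
    (hEg : ∀ p, fderiv ℝ g p p = c * g p) : g 0 = 0 := by
  have h := hEg 0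
  rw [(fderiv ℝ g 0).map_zero] at h
  rcases mul_eq_zero.1 h.symm with h' | h'
  · exact absurd h' hc
  · exact h'

lemma psi_const {f g : E3 → ℝ} (hsm : ContDiff ℝ (⊤ : ℕ∞) f) (hg : ContDiff ℝ (⊤ : ℕ∞) g)
    (hEf : ∀ p, fderiv ℝ f p p = 3 * (p 2 * g p))
    (hEg : ∀ p, fderiv ℝ g p p = 2 * g p) :
    ∀ p : E3, f p = f 0 + p 2 * g p := by
  have hgd : Differentiable ℝ g := smooth_diff hg
  have hfd : Differentiable ℝ f := smooth_diff hsm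
  have hψsm : ContDiff ℝ (⊤ : ℕ∞) (fun q : E3 => f q - q 2 * g q) := by fun_prop
  have hEψ : ∀ p, fderiv ℝ (fun q : E3 => f q - q 2 * g q) p p
      = 0 * (fun q : E3 => f q - q 2 * g q) p := by
    intro p
    rw [fderiv_fun_sub (hfd p) (by fun_prop)]
    have hzg : fderiv ℝ (fun q : E3 => q 2 * g q) p p = 3 * (p 2 * g p) := by
      rw [euler_coord (f := fun q : E3 => q 2 * g q),
        pd_mul (by fun_prop) (hgd p), pd_mul (by fun_prop) (hgd p),
        pd_mul (by fun_prop) (hgd p), pd_coord, pd_coord, pd_coord]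
      have hEgc := hEg p
      rw [euler_coord] at hEgc
      simp only [show ((0:Fin 3) = 2) = False by simp, show ((1:Fin 3) = 2) = False by simp,
        show ((2:Fin 3) = 2) = True by simp, if_false, if_true]
      linear_combination p 2 * hEgc
    simp only [ContinuousLinearMap.sub_apply]
    rw [hzg, hEf p]
    ring
  have hpdzero : ∀ i : Fin 3, ∀ q, pd i (fun q : E3 => f q - q 2 * g q) q = 0 := by
    intro i
    apply eigen_neg_one_zero (smooth_diff (pd_smooth hψsm i))
    intro q
    rw [euler_step hψsm 0 hEψ i q]; ring
  have hconst := const_of_pd_zero (smooth_diff hψsm) hpdzero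
  intro p
  have h := hconst p
  have h02 : (0 : E3) 2 = 0 := rfl
  rw [h02] at h
  simp only [zero_mul, sub_zero] at h
  linarith

lemma pd_lin (c d : ℝ) (k : Fin 3) (q : E3) :
    pd k (fun r : E3 => c * r 0 + d * r 1) q
      = c * (if k = 0 then 1 else 0) + d * (if k = 1 then 1 else 0) := by
  rw [pd_add (by fun_prop) (by fun_prop), pd_const_mul (by fun_prop),
    pd_const_mul (by fun_prop), pd_coord, pd_coord]

lemma g_quadratic {g : E3 → ℝ} (hg : ContDiff ℝ (⊤ : ℕ∞) g)
    (hEg : ∀ p, fderiv ℝ g p p = 2 * g p) (hg2 : ∀ p, pd 2 g p = 0)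
    (hΔg : ∀ p, pd 0 (pd 0 g) p + pd 1 (pd 1 g) p + pd 2 (pd 2 g) p = 0) :
    ∀ p : E3, g p = pd 1 (pd 0 g) 0 * (p 0 * p 1)
      + (pd 0 (pd 0 g) 0 / 2) * (p 0 * p 0 - p 1 * p 1) := by
  have hgd : Differentiable ℝ g := smooth_diff hg
  set a := pd 0 (pd 0 g) 0 with ha
  set b := pd 1 (pd 0 g) 0 with hb
  have hg2fun : pd 2 g = fun _ : E3 => (0:ℝ) := funext hg2
  have hpd2zero : ∀ j : Fin 3, ∀ p, pd j (pd 2 g) p = 0 := by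
    intro j p; rw [hg2fun, pd_const]
  have h2cross : ∀ j : Fin 3, ∀ p, pd 2 (pd j g) p = 0 := by
    intro j p; rw [pd_comm hg 2 j p]; exact hpd2zero j p
  have h00 : ∀ p, pd 0 (pd 0 g) p = a := fun p => gij_const hg hEg 0 0 p
  have h10 : ∀ p, pd 1 (pd 0 g) p = b := fun p => gij_const hg hEg 0 1 p
  have h01 : ∀ p, pd 0 (pd 1 g) p = b := by
    intro p; rw [pd_comm hg 0 1 p]; exact h10 p
  have h11 : ∀ p, pd 1 (pd 1 g) p = -a := by
    intro p
    have h := hΔg p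
    rw [h00 p, hpd2zero 2 p] at h
    linarith
  have hgi0 : ∀ i : Fin 3, pd i g 0 = 0 := by
    intro i
    have e1 : ∀ q, fderiv ℝ (pd i g) q q = 1 * pd i g q := by
      intro q; rw [euler_step hg 2 hEg i q]; ring
    simpa using eigen_val0 1 one_ne_zero e1
  have hg0 : g 0 = 0 := eigen_val0 2 two_ne_zero hEg
  have hzc : ∀ i : Fin 3, (0 : E3) i = 0 := fun i => rfl
  set φ : E3 → ℝ := fun q => g q - (b * (q 0 * q 1) + a / 2 * (q 0 * q 0 - q 1 * q 1)) with hφ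
  have hφsm : ContDiff ℝ (⊤ : ℕ∞) φ := by rw [hφ]; fun_prop
  have hpdφform : ∀ j : Fin 3, ∀ q : E3,
      pd j φ q = pd j g q - (b * ((if j = 0 then (1:ℝ) else 0) * q 1
          + q 0 * (if j = 1 then 1 else 0))
        + a / 2 * (((if j = 0 then (1:ℝ) else 0) * q 0 + q 0 * (if j = 0 then 1 else 0))
          - ((if j = 1 then (1:ℝ) else 0) * q 1 + q 1 * (if j = 1 then 1 else 0)))) := by
    intro j q
    rw [hφ]
    rw [pd_sub (hgd q) (by fun_prop), pd_add (by fun_prop) (by fun_prop),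
      pd_const_mul (by fun_prop), pd_const_mul (by fun_prop),
      pd_mul (by fun_prop) (by fun_prop), pd_sub (by fun_prop) (by fun_prop),
      pd_mul (by fun_prop) (by fun_prop), pd_mul (by fun_prop) (by fun_prop)]
    simp only [pd_coord]
  have hpd0φ : pd 0 φ = fun q : E3 => pd 0 g q - (a * q 0 + b * q 1) := by
    funext q
    rw [hpdφform 0 q]
    simp
    ring
  have hpd1φ : pd 1 φ = fun q : E3 => pd 1 g q - (b * q 0 + (-a) * q 1) := by
    funext q
    rw [hpdφform 1 q]
    simp
    ring
  have hpd2φ : pd 2 φ = fun q : E3 => pd 2 g q := by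
    funext q
    rw [hpdφform 2 q]
    simp
  -- second derivatives of φ vanish : j = 0
  have hk00 : ∀ q, pd 0 (pd 0 φ) q = 0 := by
    intro q
    rw [hpd0φ, pd_sub ((pd_diff hg 0) q) (by fun_prop), pd_lin]
    simp
    rw [h00 q]
    ring
  have hk10 : ∀ q, pd 1 (pd 0 φ) q = 0 := by
    intro q
    rw [hpd0φ, pd_sub ((pd_diff hg 0) q) (by fun_prop), pd_lin]
    simp
    rw [h10 q]
    ring
  have hk20 : ∀ q, pd 2 (pd 0 φ) q = 0 := by
    intro q
    rw [hpd0φ, pd_sub ((pd_diff hg 0) q) (by fun_prop), pd_lin]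
    simp
    rw [h2cross 0 q]
  have hk01 : ∀ q, pd 0 (pd 1 φ) q = 0 := by
    intro q
    rw [hpd1φ, pd_sub ((pd_diff hg 1) q) (by fun_prop), pd_lin]
    simp
    rw [h01 q]
    ring
  have hk11 : ∀ q, pd 1 (pd 1 φ) q = 0 := by
    intro q
    rw [hpd1φ, pd_sub ((pd_diff hg 1) q) (by fun_prop), pd_lin]
    simp
    rw [h11 q]
    ring
  have hk21 : ∀ q, pd 2 (pd 1 φ) q = 0 := by
    intro q
    rw [hpd1φ, pd_sub ((pd_diff hg 1) q) (by fun_prop), pd_lin]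
    simp
    rw [h2cross 1 q]
  have hfirst0 : ∀ p : E3, pd 0 φ p = 0 := by
    intro p
    have hc := const_of_pd_zero (pd_diff hφsm 0) (by
      intro k q
      fin_cases k
      · exact hk00 q
      · exact hk10 q
      · exact hk20 q) p
    rw [hc, hpd0φ]
    simp only [hzc, hgi0]
    ring
  have hfirst1 : ∀ p : E3, pd 1 φ p = 0 := by
    intro p
    have hc := const_of_pd_zero (pd_diff hφsm 1) (by
      intro k q
      fin_cases k
      · exact hk01 q
      · exact hk11 q
      · exact hk21 q) p
    rw [hc, hpd1φ]
    simp only [hzc, hgi0]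
    ring
  have hfirst2 : ∀ p : E3, pd 2 φ p = 0 := by
    intro p
    rw [hpd2φ]
    exact hg2 p
  have hfirst : ∀ j : Fin 3, ∀ p : E3, pd j φ p = 0 := by
    intro j
    fin_cases j
    · exact hfirst0
    · exact hfirst1
    · exact hfirst2
  intro p
  have hc := const_of_pd_zero (smooth_diff hφsm) hfirst p
  rw [hφ] at hc
  simp only [hzc, hg0] at hc
  have hz : (0:ℝ) - (b * (0 * 0) + a / 2 * (0 * 0 - 0 * 0)) = 0 := by ring
  rw [hz] at hc
  linarith

lemma forward_dir {f : E3 → ℝ} (hf : Harmonic3 f)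
    (hprod : Harmonic3 (fun p => (p 0 ^ 2 + p 1 ^ 2 - 2 * p 2 ^ 2) * f p)) :
    ∃ α β γ : ℝ, ∀ p : E3,
      f p = α + β * (p 0 * p 1 * p 2) + γ * ((p 0 ^ 2 - p 1 ^ 2) * p 2) := by
  obtain ⟨hsm, hΔ⟩ := hf
  have hL : ∀ p : E3, p 0 * pd 0 f p + p 1 * pd 1 f p - 2 * (p 2 * pd 2 f p) = 0 := by
    intro p
    have h := hprod.2 p
    rw [lap_mul hsm p, hΔ p] at h
    linarith
  obtain ⟨hg2, hEg⟩ := g_facts hsm hΔ hL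
  have hgsm : ContDiff ℝ (⊤ : ℕ∞) (pd 2 f) := pd_smooth hsm 2
  have hquad := g_quadratic hgsm hEg hg2 (fun p => lap_g_zero hsm hΔ p)
  have hEf : ∀ p : E3, fderiv ℝ f p p = 3 * (p 2 * pd 2 f p) := by
    intro p
    rw [euler_coord]
    have := hL p
    linarith
  have hrep := psi_const hsm hgsm hEf hEg
  refine ⟨f 0, pd 1 (pd 0 (pd 2 f)) 0, pd 0 (pd 0 (pd 2 f)) 0 / 2, fun p => ?_⟩
  rw [hrep p, hquad p]
  ring

end ConeHarmonic

end

/-- For harmonic `f : ℝ³ → ℝ`, the product `(x² + y² − 2z²)·f` is harmonic iff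
`f(x,y,z) = α + β·xyz + γ·(x² − y²)z` for some reals `α, β, γ`. -/
theorem harmonic_mul_cone_iff (f : EuclideanSpace ℝ (Fin 3) → ℝ) (hf : Harmonic3 f) :
    Harmonic3 (fun p => (p 0 ^ 2 + p 1 ^ 2 - 2 * p 2 ^ 2) * f p) ↔
      ∃ α β γ : ℝ, ∀ p : EuclideanSpace ℝ (Fin 3),
        f p = α + β * (p 0 * p 1 * p 2) + γ * ((p 0 ^ 2 - p 1 ^ 2) * p 2) := by
  constructor
  · intro h
    exact ConeHarmonic.forward_dir hf h
  · rintro ⟨α, β, γ, hform⟩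
    exact ConeHarmonic.reverse_dir hf α β γ (fun p => by rw [hform p]; rfl)
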